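/- (Small-ball probability bound used in the precoding rate analysis.) Let t ≥ 1 and c ≥ 0. Then μ{h ∈ ℂ^t : ‖h‖² ≤ c} ≤ c^t/Γ(t+1). -/

import Mathlib

/-! Bound the Gaussian density by its maximum `π⁻ᵗ`; the remaining factor is the volume
`π ^ t * c ^ t / t!` of the ball of radius `√c` in `ℂ ^ t ≃ ℝ ^ (2t)`. -/

open MeasureTheory

noncomputable instance (t : ℕ) : MeasureSpace (EuclideanSpace ℂ (Fin t)) where
  volume := Measure.map (WithLp.toLp 2) (MeasureSpace.pi (α := fun _ : Fin t => ℂ)).volume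

/-- The Gaussian tail function `Q(x) = (1/√(2π)) ∫_x^∞ exp(-u²/2) du`. -/
noncomputable def gaussianQ (x : ℝ) : ℝ :=
  (Real.sqrt (2 * Real.pi))⁻¹ * ∫ u in Set.Ioi x, Real.exp (-(u ^ 2) / 2)

/-- The standard complex Gaussian measure `CN(0, I_t)` on `ℂ^t`, with density
`h ↦ π^{-t} exp(-‖h‖²)` with respect to Lebesgue measure. -/
noncomputable def stdCGauss (t : ℕ) : Measure (EuclideanSpace ℂ (Fin t)) :=
  volume.withDensity fun h => ENNReal.ofReal ((Real.pi ^ t)⁻¹ * Real.exp (-‖h‖ ^ 2))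

open Metric Real Nat

theorem EuclideanSpace.volume_closedBall_zero_complex (t : ℕ) [NeZero t] (r : ℝ) :
    volume (closedBall (0 : EuclideanSpace ℂ (Fin t)) r) =
      .ofReal r ^ (2 * t) * .ofReal (π ^ t / t !) := by
  have hball : WithLp.toLp 2 ⁻¹' closedBall (0 : EuclideanSpace ℂ (Fin t)) r =
      {x : Fin t → ℂ | (∑ i, ‖x i‖ ^ (2 : ℝ)) ^ (1 / (2 : ℝ)) ≤ r} := by
    ext x
    simp [EuclideanSpace.norm_eq, sqrt_eq_rpow]
  rw [show (volume : Measure (EuclideanSpace ℂ (Fin t)))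
      = Measure.map (MeasurableEquiv.toLp 2 (Fin t → ℂ)) volume from rfl,
    MeasurableEquiv.map_apply, MeasurableEquiv.coe_toLp, hball]
  convert Complex.volume_sum_rpow_le (ι := Fin t) one_le_two r using 3
  · simp
  · rw [Fintype.card_fin, mul_div_cancel_left₀ _ two_ne_zero, Gamma_nat_eq_factorial]
    norm_num

theorem stdCGauss_le_smul_volume (t : ℕ) :
    stdCGauss t ≤ ENNReal.ofReal (π ^ t)⁻¹ • volume := by
  rw [← withDensity_const]
  refine withDensity_mono (.of_forall fun h => ENNReal.ofReal_le_ofReal ?_)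
  exact mul_le_of_le_one_right (by positivity) (exp_le_one_iff.mpr (by nlinarith [norm_nonneg h]))

/-- Small-ball probability bound: `μ{h : ‖h‖² ≤ c} ≤ c^t / Γ(t+1)`. -/
theorem norm_sq_small_ball (t : ℕ) (ht : 1 ≤ t) (c : ℝ) (hc : 0 ≤ c) :
    stdCGauss t {h | ‖h‖ ^ 2 ≤ c} ≤ ENNReal.ofReal (c ^ t / Real.Gamma (t + 1)) := by
  have : NeZero t := ⟨by omega⟩
  have hball : {h : EuclideanSpace ℂ (Fin t) | ‖h‖ ^ 2 ≤ c} = closedBall 0 √c := by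
    ext h
    simp [le_sqrt (norm_nonneg h) hc]
  calc stdCGauss t {h | ‖h‖ ^ 2 ≤ c}
      ≤ ENNReal.ofReal (π ^ t)⁻¹ * volume (closedBall (0 : EuclideanSpace ℂ (Fin t)) √c) := by
        rw [← hball]
        exact stdCGauss_le_smul_volume t _
    _ = ENNReal.ofReal (c ^ t / Real.Gamma (t + 1)) := by
        rw [EuclideanSpace.volume_closedBall_zero_complex, pow_mul,
          ← ENNReal.ofReal_pow (sqrt_nonneg c), sq_sqrt hc, ← ENNReal.ofReal_pow hc,
          ← ENNReal.ofReal_mul (by positivity), ← ENNReal.ofReal_mul (by positivity),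
          Gamma_nat_eq_factorial]
        congr 1
        field_simp
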